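/- arXiv:2005.02287 — 2 statements merged into one kernel-verified Lean document; each statement's English description precedes it below -/
import Mathlib

section
/- For every twice continuously differentiable function u on [0,1] × [0,Θ], the mixed derivative of the interpolant, ∂_{rθ} Πu(r,θ) = Σ_{i=1}^N ∂_r u(r,θ_i) e_i′(θ) (defined for θ outside the partition nodes), satisfies ‖∂_{rθ} Πu‖²_{L²_r(Q)} ≤ ‖∂_{rθ} u‖²_{L²_r(Q)}. -/
open MeasureTheory Set Real

/-- Squared weighted norm `‖v‖²_{L²_r(Q)} = ∫₀¹ ∫₀^Θ v(r,θ)² r dθ dr`, valued in `[0,∞]`. -/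
noncomputable def wL2r (Θ : ℝ) (v : ℝ × ℝ → ℝ) : ENNReal :=
  ∫⁻ r in Ioo (0:ℝ) 1, ∫⁻ θ in Ioo (0:ℝ) Θ, ENNReal.ofReal ((v (r, θ)) ^ 2 * r)

/-- Partial derivative with respect to the first (radial) variable. -/
noncomputable def pd1 (u : ℝ × ℝ → ℝ) (p : ℝ × ℝ) : ℝ := deriv (fun s => u (s, p.2)) p.1

/-- Partial derivative with respect to the second (angular) variable. -/
noncomputable def pd2 (u : ℝ × ℝ → ℝ) (p : ℝ × ℝ) : ℝ := deriv (fun t => u (p.1, t)) p.2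

/-!
For fixed `r`, `∂_{rθ}Πu(r, ·)` is the derivative of the piecewise linear interpolant of
`f := ∂ᵣu(r, ·)`. On each cell `(θⱼ, θⱼ₊₁)` it is the slope of `f`, which by the fundamental theorem
of calculus is the mean of `f' = ∂_{rθ}u(r, ·)` over the cell. Jensen's inequality for the square
bounds the squared mean by the mean of the square; summing over the cells and integrating in `r`
against the weight `r` gives the estimate.
-/

open Topology

theorem sq_slope_mul_le_integral_sq {f f' : ℝ → ℝ} {a b : ℝ} (hab : a < b)
    (hf : ContinuousOn f (Icc a b)) (hf' : ∀ x ∈ Ioo a b, HasDerivAt f (f' x) x)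
    (hf'c : ContinuousOn f' (Icc a b)) :
    slope f a b ^ 2 * (b - a) ≤ ∫ x in a..b, f' x ^ 2 := by
  have hint : IntegrableOn f' (Ioc a b) := hf'c.integrableOn_Icc.mono_set Ioc_subset_Icc_self
  have hint2 : IntegrableOn (fun x => f' x ^ 2) (Ioc a b) :=
    (hf'c.pow 2).integrableOn_Icc.mono_set Ioc_subset_Icc_self
  have hmean : slope f a b = ⨍ x in a..b, f' x := by
    rw [interval_average_eq_div, slope_def_field,
      intervalIntegral.integral_eq_sub_of_hasDerivAt_of_le hab.le hf hf'
        (hf'c.intervalIntegrable_of_Icc hab.le)]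
  have hjensen : (⨍ x in a..b, f' x) ^ 2 ≤ ⨍ x in a..b, f' x ^ 2 := by
    rw [uIoc_of_le hab.le]
    exact (Even.convexOn_pow even_two).map_set_average_le (continuous_pow 2).continuousOn
      isClosed_univ (by simp [hab]) (by simp) (by simp) hint hint2
  rwa [hmean, ← le_div_iff₀ (sub_pos.2 hab), ← interval_average_eq_div]

theorem lintegral_Ioc_sq_le_of_eqOn_slope {f f' h : ℝ → ℝ} {a b : ℝ} (hab : a < b)
    (hf : ContinuousOn f (Icc a b)) (hf' : ∀ x ∈ Ioo a b, HasDerivAt f (f' x) x)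
    (hf'c : ContinuousOn f' (Icc a b)) (hh : EqOn h (fun _ => slope f a b) (Ioo a b)) :
    ∫⁻ x in Ioc a b, ENNReal.ofReal (h x ^ 2) ≤ ∫⁻ x in Ioc a b, ENNReal.ofReal (f' x ^ 2) := by
  have hint2 : IntegrableOn (fun x => f' x ^ 2) (Ioc a b) :=
    (hf'c.pow 2).integrableOn_Icc.mono_set Ioc_subset_Icc_self
  rw [← setLIntegral_congr Ioo_ae_eq_Ioc, setLIntegral_congr_fun measurableSet_Ioo
      fun x hx => by rw [hh hx], setLIntegral_const, Real.volume_Ioo,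
    ← ENNReal.ofReal_mul (sq_nonneg _),
    ← ofReal_integral_eq_lintegral_ofReal hint2 (ae_of_all _ fun x => sq_nonneg _),
    ← intervalIntegral.integral_of_le hab.le]
  exact ENNReal.ofReal_le_ofReal (sq_slope_mul_le_integral_sq hab hf hf' hf'c)

theorem lintegral_Ioc_le_of_partition {μ : Measure ℝ} {f g : ℝ → ENNReal} {t : ℕ → ℝ} {n : ℕ}
    (ht : MonotoneOn t (Iic n))
    (hfg : ∀ j < n,
      ∫⁻ x in Ioc (t j) (t (j + 1)), f x ∂μ ≤ ∫⁻ x in Ioc (t j) (t (j + 1)), g x ∂μ) :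
    ∫⁻ x in Ioc (t 0) (t n), f x ∂μ ≤ ∫⁻ x in Ioc (t 0) (t n), g x ∂μ := by
  induction n with
  | zero => simp
  | succ n ih =>
    have hsplit : Ioc (t 0) (t (n + 1)) = Ioc (t 0) (t n) ∪ Ioc (t n) (t (n + 1)) :=
      (Ioc_union_Ioc_eq_Ioc (ht (by simp) (by simp) n.zero_le)
        (ht (by simp) (by simp) n.le_succ)).symm
    have hdisj : Disjoint (Ioc (t 0) (t n)) (Ioc (t n) (t (n + 1))) :=
      Ioc_disjoint_Ioc_of_le le_rfl
    rw [hsplit, lintegral_union measurableSet_Ioc hdisj, lintegral_union measurableSet_Ioc hdisj]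
    exact add_le_add (ih (ht.mono (Iic_subset_Iic.2 n.le_succ)) fun j hj => hfg j (by omega))
      (hfg n n.lt_succ_self)

theorem lintegral_sq_le_of_eqOn_slope_of_partition {f f' h : ℝ → ℝ} {t : ℕ → ℝ} {n : ℕ}
    (ht : StrictMonoOn t (Iic n)) (hf : ContinuousOn f (Icc (t 0) (t n)))
    (hf' : ∀ x ∈ Ioo (t 0) (t n), HasDerivAt f (f' x) x)
    (hf'c : ContinuousOn f' (Icc (t 0) (t n)))
    (hh : ∀ j < n, EqOn h (fun _ => slope f (t j) (t (j + 1))) (Ioo (t j) (t (j + 1)))) :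
    ∫⁻ x in Ioo (t 0) (t n), ENNReal.ofReal (h x ^ 2)
      ≤ ∫⁻ x in Ioo (t 0) (t n), ENNReal.ofReal (f' x ^ 2) := by
  rw [setLIntegral_congr Ioo_ae_eq_Ioc, setLIntegral_congr Ioo_ae_eq_Ioc]
  refine lintegral_Ioc_le_of_partition ht.monotoneOn fun j hj => ?_
  have hjn : j ∈ Iic n := Nat.le_of_lt hj
  have hj1n : j + 1 ∈ Iic n := Nat.succ_le_of_lt hj
  have h0j : t 0 ≤ t j := ht.monotoneOn (by simp) hjn j.zero_le
  have hj1 : t (j + 1) ≤ t n := ht.monotoneOn hj1n (by simp) hj1n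
  have hcell : Icc (t j) (t (j + 1)) ⊆ Icc (t 0) (t n) := Icc_subset_Icc h0j hj1
  exact lintegral_Ioc_sq_le_of_eqOn_slope (ht hjn hj1n j.lt_succ_self) (hf.mono hcell)
    (fun x hx => hf' x (Ioo_subset_Ioo h0j hj1 hx)) (hf'c.mono hcell) (hh j hj)

theorem deriv_eq_slope_of_affine_on_Icc {g : ℝ → ℝ} {a b x : ℝ}
    (hg : ∀ y ∈ Icc a b, g y = g a + (g b - g a) * (y - a) / (b - a)) (hx : x ∈ Ioo a b) :
    deriv g x = slope g a b := by
  have hev : g =ᶠ[𝓝 x] fun y => g a + (g b - g a) * (y - a) / (b - a) :=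
    Filter.eventuallyEq_of_mem (Ioo_mem_nhds hx.1 hx.2) fun y hy => hg y (Ioo_subset_Icc_self hy)
  have hline := ((((hasDerivAt_id' x).sub_const a).const_mul (g b - g a)).div_const
    (b - a)).const_add (g a)
  rw [hev.deriv_eq, hline.deriv, slope_def_field]
  ring

theorem sum_mul_deriv_hat_eq_slope {N j : ℕ} {t : ℕ → ℝ} {e : ℕ → ℝ → ℝ} (c : ℕ → ℝ)
    (hj : j + 1 < N) (hnode : ∀ i < N, ∀ j < N, e i (t j) = if i = j then 1 else 0)
    (hlin : ∀ i < N, ∀ x ∈ Icc (t j) (t (j + 1)),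
      e i x = e i (t j) + (e i (t (j + 1)) - e i (t j)) * (x - t j) / (t (j + 1) - t j))
    {θ : ℝ} (hθ : θ ∈ Ioo (t j) (t (j + 1))) :
    ∑ i ∈ Finset.range N, c i * deriv (e i) θ = (c (j + 1) - c j) / (t (j + 1) - t j) := by
  have hderiv : ∀ i < N, deriv (e i) θ
      = ((if i = j + 1 then 1 else 0) - (if i = j then 1 else 0)) / (t (j + 1) - t j) := by
    intro i hi
    rw [deriv_eq_slope_of_affine_on_Icc (hlin i hi) hθ, slope_def_field, hnode i hi j (by omega),
      hnode i hi (j + 1) hj]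
  rw [Finset.sum_congr rfl fun i hi => by rw [hderiv i (Finset.mem_range.1 hi)]]
  simp only [mul_div_assoc', ← Finset.sum_div, mul_sub, mul_ite, mul_one, mul_zero,
    Finset.sum_sub_distrib, Finset.sum_ite_eq', Finset.mem_range, hj, if_true,
    show j < N by omega]

theorem pd1_eq_fderivWithin {u : ℝ × ℝ → ℝ} {a b c d r θ : ℝ}
    (hu : DifferentiableOn ℝ u (Icc a b ×ˢ Icc c d)) (hr : r ∈ Ioo a b) (hθ : θ ∈ Icc c d) :
    pd1 u (r, θ) = fderivWithin ℝ u (Icc a b ×ˢ Icc c d) (r, θ) (1, 0) := by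
  have hline : HasDerivWithinAt (fun s : ℝ => (s, θ)) ((1 : ℝ), (0 : ℝ)) (Icc a b) r :=
    ((hasDerivAt_id' r).prodMk (hasDerivAt_const r θ)).hasDerivWithinAt
  have hcomp := (hu _ ⟨Ioo_subset_Icc_self hr, hθ⟩).hasFDerivWithinAt.comp_hasDerivWithinAt r
    hline fun s hs => ⟨hs, hθ⟩
  exact (hcomp.hasDerivAt (Icc_mem_nhds hr.1 hr.2)).deriv

/-- The witness `g` is `∂θ∂ᵣu(r, ·)` computed within the closed box: unlike `pd2 (pd1 u)`, it is
continuous up to the endpoints, as the fundamental theorem of calculus on the end cells needs. -/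
theorem exists_hasDerivAt_pd1_of_contDiffOn {u : ℝ × ℝ → ℝ} {a b c d r : ℝ}
    (hu : ContDiffOn ℝ 2 u (Icc a b ×ˢ Icc c d)) (hcd : c < d) (hr : r ∈ Ioo a b) :
    ∃ g : ℝ → ℝ, ContinuousOn g (Icc c d) ∧ ContinuousOn (fun θ => pd1 u (r, θ)) (Icc c d) ∧
      ∀ θ ∈ Ioo c d, HasDerivAt (fun θ => pd1 u (r, θ)) (g θ) θ := by
  set box := Icc a b ×ˢ Icc c d
  have hbox : UniqueDiffOn ℝ box :=
    (uniqueDiffOn_Icc (hr.1.trans hr.2)).prod (uniqueDiffOn_Icc hcd)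
  set φ : ℝ × ℝ → ℝ := fun p => fderivWithin ℝ u box p (1, 0)
  have hφ : ContDiffOn ℝ 1 φ box :=
    (hu.fderivWithin hbox (by norm_num)).clm_apply contDiffOn_const
  have hslice : MapsTo (fun θ => (r, θ)) (Icc c d) box := fun θ hθ => ⟨Ioo_subset_Icc_self hr, hθ⟩
  have hslice_cont : Continuous fun θ : ℝ => (r, θ) := continuous_const.prodMk continuous_id
  have hpd1 : EqOn (fun θ => pd1 u (r, θ)) (fun θ => φ (r, θ)) (Icc c d) := fun θ hθ =>
    pd1_eq_fderivWithin (hu.differentiableOn two_ne_zero) hr hθ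
  refine ⟨fun θ => fderivWithin ℝ φ box (r, θ) (0, 1), ?_, ?_, fun θ hθ => ?_⟩
  · exact ((hφ.continuousOn_fderivWithin hbox le_rfl).clm_apply continuousOn_const).comp
      hslice_cont.continuousOn hslice
  · exact (hφ.continuousOn.comp hslice_cont.continuousOn hslice).congr hpd1
  · have hnhds : box ∈ 𝓝 (r, θ) :=
      prod_mem_nhds (Icc_mem_nhds hr.1 hr.2) (Icc_mem_nhds hθ.1 hθ.2)
    have hφ' : HasFDerivAt φ (fderivWithin ℝ φ box (r, θ)) (r, θ) :=
      (hφ.differentiableOn one_ne_zero _ (mem_of_mem_nhds hnhds)).hasFDerivWithinAt.hasFDerivAt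
        hnhds
    exact (hφ'.comp_hasDerivAt θ ((hasDerivAt_const θ r).prodMk (hasDerivAt_id' θ)))
      |>.congr_of_eventuallyEq (Filter.eventuallyEq_of_mem (Icc_mem_nhds hθ.1 hθ.2) hpd1)

theorem wL2r_mono {Θ : ℝ} {v w : ℝ × ℝ → ℝ}
    (h : ∀ r ∈ Ioo (0 : ℝ) 1, ∫⁻ θ in Ioo (0 : ℝ) Θ, ENNReal.ofReal (v (r, θ) ^ 2)
      ≤ ∫⁻ θ in Ioo (0 : ℝ) Θ, ENNReal.ofReal (w (r, θ) ^ 2)) :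
    wL2r Θ v ≤ wL2r Θ w := by
  have hweight : ∀ (z : ℝ × ℝ → ℝ) (r : ℝ),
      ∫⁻ θ in Ioo (0 : ℝ) Θ, ENNReal.ofReal (z (r, θ) ^ 2 * r)
        = (∫⁻ θ in Ioo (0 : ℝ) Θ, ENNReal.ofReal (z (r, θ) ^ 2)) * ENNReal.ofReal r := by
    intro z r
    simp only [ENNReal.ofReal_mul (sq_nonneg _)]
    exact lintegral_mul_const' _ _ ENNReal.ofReal_ne_top
  simp only [wL2r, hweight]
  exact setLIntegral_mono' measurableSet_Ioo fun r hr => mul_le_mul_left (h r hr) _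

theorem stmt7_general (Θ : ℝ) (hΘ₀ : 0 < Θ)
    (N : ℕ) (t : ℕ → ℝ) (e : ℕ → ℝ → ℝ)
    (ht0 : t 0 = 0) (htN : t (N - 1) = Θ)
    (htmono : ∀ j, j + 1 < N → t j < t (j + 1))
    (hnode : ∀ i < N, ∀ j < N, e i (t j) = if i = j then 1 else 0)
    (hlin : ∀ i < N, ∀ j, j + 1 < N → ∀ x ∈ Icc (t j) (t (j + 1)),
      e i x = e i (t j) + (e i (t (j + 1)) - e i (t j)) * (x - t j) / (t (j + 1) - t j))
    (u : ℝ × ℝ → ℝ) (hu : ContDiffOn ℝ 2 u (Icc (0:ℝ) 1 ×ˢ Icc (0:ℝ) Θ))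
    (dPiu : ℝ × ℝ → ℝ)
    (hdPiu : ∀ p, dPiu p
      = ∑ i ∈ Finset.range N, (deriv (fun s => u (s, t i)) p.1) * deriv (e i) p.2) :
    wL2r Θ dPiu ≤ wL2r Θ (pd2 (pd1 u)) := by
  have ht : StrictMonoOn t (Iic (N - 1)) :=
    strictMonoOn_Iic_of_lt_succ fun j hj => by simpa using htmono j (by omega)
  refine wL2r_mono fun r hr => ?_
  obtain ⟨g, hgc, hfc, hfg⟩ := exists_hasDerivAt_pd1_of_contDiffOn hu hΘ₀ hr
  have hslope : ∀ j < N - 1, EqOn (fun θ => dPiu (r, θ))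
      (fun _ => slope (fun θ => pd1 u (r, θ)) (t j) (t (j + 1))) (Ioo (t j) (t (j + 1))) :=
    fun j hj θ hθ => by
      simp only [hdPiu, slope_def_field]
      exact sum_mul_deriv_hat_eq_slope _ (by omega) hnode (hlin · · j (by omega)) hθ
  calc ∫⁻ θ in Ioo 0 Θ, ENNReal.ofReal (dPiu (r, θ) ^ 2)
      ≤ ∫⁻ θ in Ioo 0 Θ, ENNReal.ofReal (g θ ^ 2) := by
        rw [← ht0, ← htN] at hfc hgc hfg ⊢
        exact lintegral_sq_le_of_eqOn_slope_of_partition ht hfc hfg hgc hslope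
    _ = ∫⁻ θ in Ioo 0 Θ, ENNReal.ofReal (pd2 (pd1 u) (r, θ) ^ 2) :=
        setLIntegral_congr_fun measurableSet_Ioo fun θ hθ => by rw [pd2, (hfg θ hθ).deriv]

/-- Stability of the mixed derivative of the interpolant: for `u`
twice continuously differentiable on `[0,1] × [0,Θ]`,
`‖∂_{rθ} Πu‖²_{L²_r(Q)} ≤ ‖∂_{rθ} u‖²_{L²_r(Q)}`, where
`∂_{rθ} Πu (r,θ) = Σ_i ∂_r u(r,θ_i) e_i′(θ)` is defined for `θ` outside the nodes. -/
theorem stmt7 (Θ : ℝ) (hΘ₀ : 0 < Θ) (hΘ₂ : Θ < 2 * π)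
    (N : ℕ) (hN : 2 ≤ N) (t : ℕ → ℝ) (e : ℕ → ℝ → ℝ)
    (ht0 : t 0 = 0) (htN : t (N - 1) = Θ)
    (htmono : ∀ j, j + 1 < N → t j < t (j + 1))
    (hnode : ∀ i < N, ∀ j < N, e i (t j) = if i = j then 1 else 0)
    (hlin : ∀ i < N, ∀ j, j + 1 < N → ∀ x ∈ Icc (t j) (t (j + 1)),
      e i x = e i (t j) + (e i (t (j + 1)) - e i (t j)) * (x - t j) / (t (j + 1) - t j))
    (u : ℝ × ℝ → ℝ) (hu : ContDiffOn ℝ 2 u (Icc (0:ℝ) 1 ×ˢ Icc (0:ℝ) Θ))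
    (dPiu : ℝ × ℝ → ℝ)
    (hdPiu : ∀ p, dPiu p
      = ∑ i ∈ Finset.range N, (deriv (fun s => u (s, t i)) p.1) * deriv (e i) p.2) :
    wL2r Θ dPiu ≤ wL2r Θ (pd2 (pd1 u)) :=
  stmt7_general Θ hΘ₀ N t e ht0 htN htmono hnode hlin u hu dPiu hdPiu
end

section
/- For every twice continuously differentiable function u on [0,1] × [0,Θ], the radial derivative of the interpolation error satisfies ‖∂_r (u − Πu)‖²_{L²_r(Q)} ≤ 4 h² ‖∂_{rθ} u‖²_{L²_r(Q)}. -/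
open MeasureTheory Set Real

/-- The interpolant `(Πu)(r,θ) = Σ_i u(r, θ_i) e_i(θ)`. -/
noncomputable def interp (N : ℕ) (t : ℕ → ℝ) (e : ℕ → ℝ → ℝ) (u : ℝ × ℝ → ℝ) :
    ℝ × ℝ → ℝ :=
  fun p => ∑ i ∈ Finset.range N, u (p.1, t i) * e i p.2

/-!
For fixed `r`, the radial derivative commutes with interpolation in `θ`, so `∂_r (u − Πu)(r, ·)`
is the piecewise linear interpolation error of `w = ∂_r u(r, ·)`. On a cell `[a, b]` with
`s = (θ − a)/(b − a)` this error is `(1 − s)(w θ − w a) − s (w b − w θ)`, hence bounded by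
`∫_a^b |w'|`, and by Cauchy–Schwarz its square is at most `(b − a) ∫_a^b w'²`. Integrating over
the cell gives the factor `(b − a)² ≤ h²`; summing over the cells and integrating against `r dr`
proves the estimate, even with the constant `1` in place of `4`.
-/

open Topology

noncomputable def lineInterp (a b : ℝ) (f : ℝ → ℝ) (x : ℝ) : ℝ :=
  f a + (f b - f a) * (x - a) / (b - a)

theorem sq_intervalIntegral_abs_le {q : ℝ → ℝ} {a b : ℝ} (hab : a ≤ b)
    (hq : ContinuousOn q (Icc a b)) :
    (∫ x in a..b, |q x|) ^ 2 ≤ (b - a) * ∫ x in a..b, q x ^ 2 := by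
  set A := ∫ x in a..b, |q x|
  have hq' : ContinuousOn q (uIcc a b) := by rwa [uIcc_of_le hab]
  have habs : IntervalIntegrable (fun x => |q x|) volume a b := hq'.abs.intervalIntegrable
  have hsq : IntervalIntegrable (fun x => q x ^ 2) volume a b := (hq'.pow 2).intervalIntegrable
  -- `0 ≤ ∫ ((b - a)|q| - A)²` expands to `(b - a) ((b - a) ∫ q² - A²)`.
  have hnonneg : 0 ≤ ∫ x in a..b, ((b - a) * |q x| - A) ^ 2 :=
    intervalIntegral.integral_nonneg hab fun x _ => sq_nonneg _
  have hexpand : ∫ x in a..b, ((b - a) * |q x| - A) ^ 2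
      = (b - a) * ((b - a) * ∫ x in a..b, q x ^ 2) - (b - a) * A ^ 2 := by
    have hpt : ∀ x, ((b - a) * |q x| - A) ^ 2
        = (b - a) ^ 2 * q x ^ 2 - 2 * (b - a) * A * |q x| + A ^ 2 := fun x => by
      rw [← sq_abs (q x)]; ring
    simp only [hpt]
    rw [intervalIntegral.integral_add ((hsq.const_mul _).sub (habs.const_mul _))
        intervalIntegrable_const,
      intervalIntegral.integral_sub (hsq.const_mul _) (habs.const_mul _),
      intervalIntegral.integral_const_mul, intervalIntegral.integral_const_mul,
      intervalIntegral.integral_const, smul_eq_mul]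
    ring
  rcases hab.eq_or_lt with rfl | hlt
  · simp [A]
  · nlinarith

theorem sq_sub_lineInterp_le {w w' : ℝ → ℝ} {a b θ : ℝ} (hab : a < b)
    (hw : ContinuousOn w (Icc a b)) (hw' : ContinuousOn w' (Icc a b))
    (hderiv : ∀ x ∈ Ioo a b, HasDerivAt w (w' x) x) (hθ : θ ∈ Icc a b) :
    (w θ - lineInterp a b w θ) ^ 2 ≤ (b - a) * ∫ x in a..b, w' x ^ 2 := by
  have hw'_int : ∀ {c d}, a ≤ c → c ≤ d → d ≤ b → IntervalIntegrable w' volume c d :=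
    fun hac hcd hdb => (hw'.mono (Icc_subset_Icc hac hdb)).intervalIntegrable_of_Icc hcd
  have hleft : |w θ - w a| ≤ ∫ x in a..θ, |w' x| := by
    rw [← intervalIntegral.integral_eq_sub_of_hasDerivAt_of_le hθ.1
      (hw.mono (Icc_subset_Icc_right hθ.2))
      (fun x hx => hderiv x ⟨hx.1, hx.2.trans_le hθ.2⟩) (hw'_int le_rfl hθ.1 hθ.2)]
    exact intervalIntegral.abs_integral_le_integral_abs hθ.1
  have hright : |w b - w θ| ≤ ∫ x in θ..b, |w' x| := by
    rw [← intervalIntegral.integral_eq_sub_of_hasDerivAt_of_le hθ.2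
      (hw.mono (Icc_subset_Icc_left hθ.1))
      (fun x hx => hderiv x ⟨hθ.1.trans_lt hx.1, hx.2⟩) (hw'_int hθ.1 hθ.2 le_rfl)]
    exact intervalIntegral.abs_integral_le_integral_abs hθ.2
  have hadd : (∫ x in a..θ, |w' x|) + ∫ x in θ..b, |w' x| = ∫ x in a..b, |w' x| :=
    intervalIntegral.integral_add_adjacent_intervals
      (hw'_int le_rfl hθ.1 hθ.2).abs (hw'_int hθ.1 hθ.2 le_rfl).abs
  set s := (θ - a) / (b - a)
  have hs0 : 0 ≤ s := div_nonneg (sub_nonneg.2 hθ.1) (sub_nonneg.2 hab.le)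
  have hs1 : s ≤ 1 := (div_le_one (sub_pos.2 hab)).2 (by linarith [hθ.2])
  have hsplit : w θ - lineInterp a b w θ = (1 - s) * (w θ - w a) - s * (w b - w θ) := by
    simp only [lineInterp, s, mul_div_assoc]; ring
  have hbound : |w θ - lineInterp a b w θ| ≤ ∫ x in a..b, |w' x| := by
    rw [hsplit, ← hadd]
    calc |(1 - s) * (w θ - w a) - s * (w b - w θ)|
        ≤ |(1 - s) * (w θ - w a)| + |s * (w b - w θ)| := abs_sub _ _
      _ = (1 - s) * |w θ - w a| + s * |w b - w θ| := by
        rw [abs_mul, abs_mul, abs_of_nonneg (sub_nonneg.2 hs1), abs_of_nonneg hs0]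
      _ ≤ |w θ - w a| + |w b - w θ| := by
        nlinarith [abs_nonneg (w θ - w a), abs_nonneg (w b - w θ)]
      _ ≤ _ := add_le_add hleft hright
  calc (w θ - lineInterp a b w θ) ^ 2 = |w θ - lineInterp a b w θ| ^ 2 := (sq_abs _).symm
    _ ≤ (∫ x in a..b, |w' x|) ^ 2 := pow_le_pow_left₀ (abs_nonneg _) hbound 2
    _ ≤ _ := sq_intervalIntegral_abs_le hab.le hw'

theorem lintegral_sq_sub_lineInterp_le {w w' : ℝ → ℝ} {a b : ℝ} (hab : a < b)
    (hw : ContinuousOn w (Icc a b)) (hw' : ContinuousOn w' (Icc a b))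
    (hderiv : ∀ x ∈ Ioo a b, HasDerivAt w (w' x) x) :
    ∫⁻ x in Ioc a b, ENNReal.ofReal ((w x - lineInterp a b w x) ^ 2)
      ≤ ENNReal.ofReal ((b - a) ^ 2) * ∫⁻ x in Ioc a b, ENNReal.ofReal (w' x ^ 2) := by
  have hB_eq : ENNReal.ofReal (∫ x in a..b, w' x ^ 2)
      = ∫⁻ x in Ioc a b, ENNReal.ofReal (w' x ^ 2) := by
    rw [intervalIntegral.integral_of_le hab.le]
    exact ofReal_integral_eq_lintegral_ofReal
      ((hw'.pow 2).integrableOn_Icc.mono_set Ioc_subset_Icc_self)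
      (ae_of_all _ fun x => sq_nonneg _)
  set B := ∫ x in a..b, w' x ^ 2
  have hB : 0 ≤ B := intervalIntegral.integral_nonneg hab.le fun x _ => sq_nonneg _
  calc ∫⁻ x in Ioc a b, ENNReal.ofReal ((w x - lineInterp a b w x) ^ 2)
      ≤ ∫⁻ _ in Ioc a b, ENNReal.ofReal ((b - a) * B) :=
        setLIntegral_mono' measurableSet_Ioc fun x hx => ENNReal.ofReal_le_ofReal
          (sq_sub_lineInterp_le hab hw hw' hderiv (Ioc_subset_Icc_self hx))
    _ = ENNReal.ofReal ((b - a) * B) * ENNReal.ofReal (b - a) := by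
        rw [setLIntegral_const, Real.volume_Ioc]
    _ = ENNReal.ofReal ((b - a) ^ 2) * ENNReal.ofReal B := by
        have hba : 0 ≤ b - a := sub_nonneg.2 hab.le
        rw [← ENNReal.ofReal_mul (mul_nonneg hba hB), ← ENNReal.ofReal_mul (sq_nonneg _)]
        ring_nf
    _ = _ := by rw [hB_eq]

theorem lintegral_Ioc_eq_sum {μ : Measure ℝ} (f : ℝ → ENNReal) {t : ℕ → ℝ} {n : ℕ}
    (ht : MonotoneOn t (Iic n)) :
    ∫⁻ x in Ioc (t 0) (t n), f x ∂μ
      = ∑ j ∈ Finset.range n, ∫⁻ x in Ioc (t j) (t (j + 1)), f x ∂μ := by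
  induction n with
  | zero => simp
  | succ m ih =>
    have ht' : MonotoneOn t (Iic m) := ht.mono (Iic_subset_Iic.2 m.le_succ)
    rw [← Ioc_union_Ioc_eq_Ioc (ht' (by simp) (by simp) m.zero_le)
        (ht (by simp) (by simp) m.le_succ),
      lintegral_union measurableSet_Ioc (Ioc_disjoint_Ioc_of_le le_rfl), ih ht',
      Finset.sum_range_succ]

section PiecewiseLinear

variable {N : ℕ} {t : ℕ → ℝ} {e : ℕ → ℝ → ℝ}

theorem monotoneOn_nodes (htmono : ∀ j, j + 1 < N → t j < t (j + 1)) :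
    MonotoneOn t (Iic (N - 1)) :=
  (strictMonoOn_Iic_of_lt_succ fun j hj => htmono j (by omega)).monotoneOn

theorem node_mem_Icc (htmono : ∀ j, j + 1 < N → t j < t (j + 1)) {i : ℕ} (hi : i < N) :
    t i ∈ Icc (t 0) (t (N - 1)) :=
  ⟨monotoneOn_nodes htmono (by simp) (by simp; omega) i.zero_le,
    monotoneOn_nodes htmono (by simp; omega) (by simp) (by omega)⟩

theorem sum_mul_eq_lineInterp
    (hnode : ∀ i < N, ∀ j < N, e i (t j) = if i = j then 1 else 0)
    (hlin : ∀ i < N, ∀ j, j + 1 < N → ∀ x ∈ Icc (t j) (t (j + 1)),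
      e i x = lineInterp (t j) (t (j + 1)) (e i) x)
    (w : ℝ → ℝ) {j : ℕ} (hj : j + 1 < N) {x : ℝ} (hx : x ∈ Icc (t j) (t (j + 1))) :
    ∑ i ∈ Finset.range N, w (t i) * e i x = lineInterp (t j) (t (j + 1)) w x := by
  have hnodal : ∀ k < N, ∑ i ∈ Finset.range N, w (t i) * e i (t k) = w (t k) := by
    intro k hk
    rw [Finset.sum_congr rfl fun i hi => by rw [hnode i (Finset.mem_range.1 hi) k hk]]
    simp [hk]
  rw [Finset.sum_congr rfl fun i hi => by rw [hlin i (Finset.mem_range.1 hi) j hj x hx],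
    lineInterp, ← hnodal j (by omega), ← hnodal (j + 1) hj, ← Finset.sum_sub_distrib, Finset.sum_mul, Finset.sum_div, ← Finset.sum_add_distrib]
  exact Finset.sum_congr rfl fun i _ => by rw [lineInterp]; ring

theorem lintegral_sq_sub_interp_le {w w' : ℝ → ℝ} {h : ℝ}
    (htmono : ∀ j, j + 1 < N → t j < t (j + 1))
    (hnode : ∀ i < N, ∀ j < N, e i (t j) = if i = j then 1 else 0)
    (hlin : ∀ i < N, ∀ j, j + 1 < N → ∀ x ∈ Icc (t j) (t (j + 1)),
      e i x = lineInterp (t j) (t (j + 1)) (e i) x)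
    (hh : ∀ j, j + 1 < N → t (j + 1) - t j ≤ h)
    (hw : ContinuousOn w (Icc (t 0) (t (N - 1))))
    (hw' : ContinuousOn w' (Icc (t 0) (t (N - 1))))
    (hderiv : ∀ x ∈ Ioo (t 0) (t (N - 1)), HasDerivAt w (w' x) x) :
    ∫⁻ x in Ioc (t 0) (t (N - 1)),
        ENNReal.ofReal ((w x - ∑ i ∈ Finset.range N, w (t i) * e i x) ^ 2)
      ≤ ENNReal.ofReal (h ^ 2) * ∫⁻ x in Ioc (t 0) (t (N - 1)), ENNReal.ofReal (w' x ^ 2) := by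
  rw [lintegral_Ioc_eq_sum _ (monotoneOn_nodes htmono),
    lintegral_Ioc_eq_sum _ (monotoneOn_nodes htmono), Finset.mul_sum]
  refine Finset.sum_le_sum fun j hj => ?_
  have hj : j + 1 < N := by rw [Finset.mem_range] at hj; omega
  have hcell : Icc (t j) (t (j + 1)) ⊆ Icc (t 0) (t (N - 1)) :=
    Icc_subset_Icc (node_mem_Icc htmono (by omega)).1 (node_mem_Icc htmono hj).2
  have hgap : 0 ≤ t (j + 1) - t j := sub_nonneg.2 (htmono j hj).le
  calc ∫⁻ x in Ioc (t j) (t (j + 1)),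
          ENNReal.ofReal ((w x - ∑ i ∈ Finset.range N, w (t i) * e i x) ^ 2)
      = ∫⁻ x in Ioc (t j) (t (j + 1)),
          ENNReal.ofReal ((w x - lineInterp (t j) (t (j + 1)) w x) ^ 2) :=
        setLIntegral_congr_fun measurableSet_Ioc fun x hx => by
          rw [sum_mul_eq_lineInterp hnode hlin w hj (Ioc_subset_Icc_self hx)]
    _ ≤ ENNReal.ofReal ((t (j + 1) - t j) ^ 2) *
          ∫⁻ x in Ioc (t j) (t (j + 1)), ENNReal.ofReal (w' x ^ 2) :=
        lintegral_sq_sub_lineInterp_le (htmono j hj) (hw.mono hcell) (hw'.mono hcell)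
          fun x hx => hderiv x
            (Ioo_subset_Ioo (node_mem_Icc htmono (by omega)).1 (node_mem_Icc htmono hj).2 hx)
    _ ≤ _ := by
        gcongr
        exact hh j hj

theorem ContDiffOn.lintegral_sq_sub_interp_le {w : ℝ → ℝ} {a b h : ℝ}
    (htmono : ∀ j, j + 1 < N → t j < t (j + 1))
    (hnode : ∀ i < N, ∀ j < N, e i (t j) = if i = j then 1 else 0)
    (hlin : ∀ i < N, ∀ j, j + 1 < N → ∀ x ∈ Icc (t j) (t (j + 1)),
      e i x = lineInterp (t j) (t (j + 1)) (e i) x)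
    (hh : ∀ j, j + 1 < N → t (j + 1) - t j ≤ h)
    (ha : t 0 = a) (hb : t (N - 1) = b) (hab : a < b) (hw : ContDiffOn ℝ 1 w (Icc a b)) :
    ∫⁻ x in Ioo a b, ENNReal.ofReal ((w x - ∑ i ∈ Finset.range N, w (t i) * e i x) ^ 2)
      ≤ ENNReal.ofReal (h ^ 2) * ∫⁻ x in Ioo a b, ENNReal.ofReal (deriv w x ^ 2) := by
  subst ha hb
  have hderiv : ∀ x ∈ Ioo (t 0) (t (N - 1)),
      HasDerivAt w (derivWithin w (Icc (t 0) (t (N - 1))) x) x := fun x hx =>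
    (hw.differentiableOn one_ne_zero x (Ioo_subset_Icc_self hx)).hasDerivWithinAt.hasDerivAt
      (Icc_mem_nhds hx.1 hx.2)
  have hderiv_eq : ∫⁻ x in Ioo (t 0) (t (N - 1)), ENNReal.ofReal (deriv w x ^ 2)
      = ∫⁻ x in Ioc (t 0) (t (N - 1)),
          ENNReal.ofReal (derivWithin w (Icc (t 0) (t (N - 1))) x ^ 2) := by
    rw [setLIntegral_congr_fun measurableSet_Ioo fun x hx => by rw [(hderiv x hx).deriv],
      setLIntegral_congr Ioo_ae_eq_Ioc]
  rw [hderiv_eq, setLIntegral_congr Ioo_ae_eq_Ioc]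
  exact _root_.lintegral_sq_sub_interp_le htmono hnode hlin hh hw.continuousOn
    (hw.continuousOn_derivWithin (uniqueDiffOn_Icc hab) le_rfl) hderiv

end PiecewiseLinear

section PartialDerivatives

variable {u : ℝ × ℝ → ℝ} {s T : Set ℝ} {r θ : ℝ}

theorem hasDerivAt_fderivWithin_apply_one_zero (hu : DifferentiableOn ℝ u (s ×ˢ T))
    (hr : s ∈ 𝓝 r) (hθ : θ ∈ T) :
    HasDerivAt (fun x => u (x, θ)) (fderivWithin ℝ u (s ×ˢ T) (r, θ) (1, 0)) r := by
  have hmaps : MapsTo (fun x : ℝ => (x, θ)) s (s ×ˢ T) := fun x hx => ⟨hx, hθ⟩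
  have hline : HasDerivWithinAt (fun x : ℝ => (x, θ)) ((1 : ℝ), (0 : ℝ)) s r :=
    ((hasDerivAt_id r).prodMk (hasDerivAt_const r θ)).hasDerivWithinAt
  exact ((hu _ ⟨mem_of_mem_nhds hr, hθ⟩).hasFDerivWithinAt.comp_hasDerivWithinAt r hline
    hmaps).hasDerivAt hr

theorem contDiffOn_pd1 (hu : ContDiffOn ℝ 2 u (s ×ˢ T)) (hs : UniqueDiffOn ℝ s)
    (hT : UniqueDiffOn ℝ T) (hr : s ∈ 𝓝 r) :
    ContDiffOn ℝ 1 (fun θ => pd1 u (r, θ)) T := by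
  have hF : ContDiffOn ℝ 1 (fun p => fderivWithin ℝ u (s ×ˢ T) p (1, 0)) (s ×ˢ T) :=
    (hu.fderivWithin (hs.prod hT) (by norm_num)).clm_apply contDiffOn_const
  refine (hF.comp (contDiffOn_const.prodMk contDiffOn_id)
    fun θ hθ => ⟨mem_of_mem_nhds hr, hθ⟩).congr fun θ hθ => ?_
  exact (hasDerivAt_fderivWithin_apply_one_zero
    (hu.differentiableOn (by norm_num)) hr hθ).deriv

theorem pd1_sub_interp {N : ℕ} {t : ℕ → ℝ} (e : ℕ → ℝ → ℝ)
    (hu : DifferentiableOn ℝ u (s ×ˢ T)) (hr : s ∈ 𝓝 r) (hθ : θ ∈ T) (ht : ∀ i < N, t i ∈ T) :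
    pd1 (fun p => u p - interp N t e u p) (r, θ)
      = pd1 u (r, θ) - ∑ i ∈ Finset.range N, pd1 u (r, t i) * e i θ := by
  have hpd1 : ∀ {θ}, θ ∈ T → HasDerivAt (fun x => u (x, θ)) (pd1 u (r, θ)) r := fun hθ =>
    (hasDerivAt_fderivWithin_apply_one_zero hu hr hθ).differentiableAt.hasDerivAt
  exact ((hpd1 hθ).sub (HasDerivAt.fun_sum fun i hi =>
    (hpd1 (ht i (Finset.mem_range.1 hi))).mul_const (e i θ))).deriv

end PartialDerivatives

theorem lintegral_ofReal_sq_mul {μ : Measure ℝ} (f : ℝ → ℝ) (r : ℝ) :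
    ∫⁻ x, ENNReal.ofReal (f x ^ 2 * r) ∂μ
      = (∫⁻ x, ENNReal.ofReal (f x ^ 2) ∂μ) * ENNReal.ofReal r := by
  simp_rw [ENNReal.ofReal_mul (sq_nonneg _)]
  exact lintegral_mul_const' _ _ ENNReal.ofReal_ne_top

theorem stmt10_general (Θ : ℝ) (hΘ₀ : 0 < Θ)
    (N : ℕ) (t : ℕ → ℝ) (e : ℕ → ℝ → ℝ)
    (ht0 : t 0 = 0) (htN : t (N - 1) = Θ)
    (htmono : ∀ j, j + 1 < N → t j < t (j + 1))
    (hnode : ∀ i < N, ∀ j < N, e i (t j) = if i = j then 1 else 0)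
    (hlin : ∀ i < N, ∀ j, j + 1 < N → ∀ x ∈ Icc (t j) (t (j + 1)),
      e i x = e i (t j) + (e i (t (j + 1)) - e i (t j)) * (x - t j) / (t (j + 1) - t j))
    (h : ℝ) (hmax : IsGreatest ((fun j => t (j + 1) - t j) '' {j : ℕ | j + 1 < N}) h)
    (u : ℝ × ℝ → ℝ) (hu : ContDiffOn ℝ 2 u (Icc (0:ℝ) 1 ×ˢ Icc (0:ℝ) Θ)) :
    wL2r Θ (pd1 (fun p => u p - interp N t e u p))
      ≤ ENNReal.ofReal (4 * h ^ 2) * wL2r Θ (pd2 (pd1 u)) := by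
  have hnodes : ∀ i < N, t i ∈ Icc 0 Θ := fun i hi => ht0 ▸ htN ▸ node_mem_Icc htmono hi
  have hinner : ∀ r ∈ Ioo (0 : ℝ) 1,
      ∫⁻ θ in Ioo 0 Θ, ENNReal.ofReal (pd1 (fun p => u p - interp N t e u p) (r, θ) ^ 2 * r)
        ≤ ENNReal.ofReal (4 * h ^ 2) *
          ∫⁻ θ in Ioo 0 Θ, ENNReal.ofReal (pd2 (pd1 u) (r, θ) ^ 2 * r) := by
    intro r hr
    have hr_nhds : Icc (0 : ℝ) 1 ∈ 𝓝 r := Icc_mem_nhds hr.1 hr.2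
    have h1D := (contDiffOn_pd1 hu (uniqueDiffOn_Icc one_pos) (uniqueDiffOn_Icc hΘ₀)
      hr_nhds).lintegral_sq_sub_interp_le htmono hnode hlin
      (fun j hj => hmax.2 ⟨j, hj, rfl⟩) ht0 htN hΘ₀
    rw [lintegral_ofReal_sq_mul _ r, lintegral_ofReal_sq_mul _ r, ← mul_assoc,
      setLIntegral_congr_fun measurableSet_Ioo fun θ hθ => by
        rw [pd1_sub_interp e (hu.differentiableOn two_ne_zero) hr_nhds (Ioo_subset_Icc_self hθ)
          hnodes]]
    refine mul_le_mul_left (h1D.trans (mul_le_mul_left ?_ _)) _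
    exact ENNReal.ofReal_le_ofReal (by nlinarith [sq_nonneg h])
  calc wL2r Θ (pd1 (fun p => u p - interp N t e u p))
      ≤ ∫⁻ r in Ioo 0 1, ENNReal.ofReal (4 * h ^ 2) *
          ∫⁻ θ in Ioo 0 Θ, ENNReal.ofReal (pd2 (pd1 u) (r, θ) ^ 2 * r) :=
        setLIntegral_mono' measurableSet_Ioo hinner
    _ = _ := lintegral_const_mul' _ _ ENNReal.ofReal_ne_top

/-- Radial derivative error estimate for the interpolant: for `u`
twice continuously differentiable on `[0,1] × [0,Θ]`,
`‖∂_r (u − Πu)‖²_{L²_r(Q)} ≤ 4 h² ‖∂_{rθ} u‖²_{L²_r(Q)}`,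
where `h = max_j (θ_{j+1} − θ_j)`. -/
theorem stmt10 (Θ : ℝ) (hΘ₀ : 0 < Θ) (hΘ₂ : Θ < 2 * π)
    (N : ℕ) (hN : 2 ≤ N) (t : ℕ → ℝ) (e : ℕ → ℝ → ℝ)
    (ht0 : t 0 = 0) (htN : t (N - 1) = Θ)
    (htmono : ∀ j, j + 1 < N → t j < t (j + 1))
    (hnode : ∀ i < N, ∀ j < N, e i (t j) = if i = j then 1 else 0)
    (hlin : ∀ i < N, ∀ j, j + 1 < N → ∀ x ∈ Icc (t j) (t (j + 1)),
      e i x = e i (t j) + (e i (t (j + 1)) - e i (t j)) * (x - t j) / (t (j + 1) - t j))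
    (h : ℝ) (hmax : IsGreatest ((fun j => t (j + 1) - t j) '' {j : ℕ | j + 1 < N}) h)
    (u : ℝ × ℝ → ℝ) (hu : ContDiffOn ℝ 2 u (Icc (0:ℝ) 1 ×ˢ Icc (0:ℝ) Θ)) :
    wL2r Θ (pd1 (fun p => u p - interp N t e u p))
      ≤ ENNReal.ofReal (4 * h ^ 2) * wL2r Θ (pd2 (pd1 u)) :=
  stmt10_general Θ hΘ₀ N t e ht0 htN htmono hnode hlin h hmax u hu
end
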